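/- arXiv:1309.4532 — 2 statements merged into one kernel-verified Lean document; each statement's English description precedes it below -/
import Mathlib

section
/- Let g be the free vector space over ℚ with basis {e_{m,l} : m, l ∈ ℕ}. Define a bilinear bracket on g by [e_{m,l}, e_{n,k}] = (k·m − n·l)·e_{m+n−1, k+l−1} whenever m+n ≥ 1 and k+l ≥ 1, and [e_{m,l}, e_{n,k}] = 0 whenever m+n = 0 or k+l = 0 (note that in those degenerate cases the structure constant k·m − n·l vanishes, since m = n = 0 or k = l = 0). Then this bracket is antisymmetric (alternating) and satisfies the Jacobi identity, so that g is a Lie algebra over ℚ. -/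
/-- The bracket of two basis vectors `e_{m,l}`, `e_{n,k}` of the Block type Lie
algebra: `[e_{m,l}, e_{n,k}] = (k*m - n*l) • e_{m+n-1, k+l-1}` when `m+n ≥ 1` and
`k+l ≥ 1`, and `0` otherwise. -/
noncomputable def blockBasisBracket (p q : ℕ × ℕ) : (ℕ × ℕ) →₀ ℚ :=
  if 1 ≤ p.1 + q.1 ∧ 1 ≤ p.2 + q.2 then
    Finsupp.single (p.1 + q.1 - 1, p.2 + q.2 - 1)
      ((q.2 : ℚ) * (p.1 : ℚ) - (q.1 : ℚ) * (p.2 : ℚ))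
  else 0

/-- The bilinear extension of `blockBasisBracket` to the free `ℚ`-vector space
with basis `{e_{m,l} : m, l ∈ ℕ}`. -/
noncomputable def blockBracket :
    ((ℕ × ℕ) →₀ ℚ) →ₗ[ℚ] ((ℕ × ℕ) →₀ ℚ) →ₗ[ℚ] ((ℕ × ℕ) →₀ ℚ) :=
  Finsupp.lsum ℚ fun p =>
    LinearMap.toSpanSingleton ℚ _
      (Finsupp.lsum ℚ fun q =>
        LinearMap.toSpanSingleton ℚ _ (blockBasisBracket p q))

/-
Since the coefficient vanishes in the cases excluded by `blockBasisBracket`, the bracket of basis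
vectors is `[e_p, e_q] = c(p, q) e_{p+q-(1,1)}` unconditionally, with `c(p, q) = q₂p₁ - q₁p₂`
antisymmetric; this gives antisymmetry. For the Jacobi identity, trilinearity and cyclic symmetry
of the Jacobiator reduce it to basis vectors; there all three terms are multiples of
`e_{p+q+r-(2,2)}`, and the coefficients `c(q, r) c(p, q + r - (1,1)) + (cyclic)` sum to zero as
polynomials.
-/

namespace LinearMap

variable {ι R M : Type*} [CommSemiring R] [AddCommMonoid M] [Module R M] (B : M →ₗ[R] M →ₗ[R] M)

noncomputable def jacobiator (x y z : M) : M :=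
  B x (B y z) + B y (B z x) + B z (B x y)

lemma jacobiator_cycle (x y z : M) : B.jacobiator x y z = B.jacobiator y z x := by
  unfold jacobiator
  abel

lemma jacobiator_eq_zero_of_basis_left (b : Module.Basis ι R M) {y z : M}
    (h : ∀ i, B.jacobiator (b i) y z = 0) (x : M) : B.jacobiator x y z = 0 := by
  let J : M →ₗ[R] M := B.flip (B y z) + B y ∘ₗ B z + B z ∘ₗ B.flip y
  have hJ : J = 0 := b.ext fun i => by simpa [J, jacobiator] using h i
  simpa [J, jacobiator] using LinearMap.congr_fun hJ x

/-- By cyclic symmetry, linearity in the first argument gives linearity in each argument. -/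
lemma jacobiator_eq_zero_of_basis (b : Module.Basis ι R M)
    (h : ∀ i j k, B.jacobiator (b i) (b j) (b k) = 0) (x y z : M) : B.jacobiator x y z = 0 := by
  have h₁ (x : M) (j k : ι) : B.jacobiator x (b j) (b k) = 0 :=
    B.jacobiator_eq_zero_of_basis_left b (fun i => h i j k) x
  have h₂ (x y : M) (k : ι) : B.jacobiator x y (b k) = 0 :=
    B.jacobiator_eq_zero_of_basis_left b (fun i => by rw [jacobiator_cycle]; exact h₁ y k i) x
  exact B.jacobiator_eq_zero_of_basis_left b (fun i => by rw [jacobiator_cycle]; exact h₂ y z i) x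

end LinearMap

lemma blockBasisBracket_eq (p q : ℕ × ℕ) :
    blockBasisBracket p q = Finsupp.single (p.1 + q.1 - 1, p.2 + q.2 - 1)
      ((q.2 : ℚ) * p.1 - (q.1 : ℚ) * p.2) := by
  rw [blockBasisBracket, ite_eq_left_iff, eq_comm, Finsupp.single_eq_zero]
  intro h
  obtain ⟨hp, hq⟩ | ⟨hp, hq⟩ : (p.1 = 0 ∧ q.1 = 0) ∨ (p.2 = 0 ∧ q.2 = 0) := by omega
  all_goals simp [hp, hq]

lemma blockBracket_single_single (p q : ℕ × ℕ) (a b : ℚ) :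
    blockBracket (Finsupp.single p a) (Finsupp.single q b) = (a * b) • blockBasisBracket p q := by
  simp [blockBracket, LinearMap.toSpanSingleton_apply, smul_smul]

lemma blockBasisBracket_swap (p q : ℕ × ℕ) : blockBasisBracket q p = -blockBasisBracket p q := by
  rw [blockBasisBracket_eq, blockBasisBracket_eq, ← Finsupp.single_neg, add_comm q.1, add_comm q.2]
  congr 1
  ring

lemma blockBracket_flip : blockBracket.flip = -blockBracket :=
  LinearMap.ext_basis Finsupp.basisSingleOne Finsupp.basisSingleOne fun p q => by
    simp only [Finsupp.coe_basisSingleOne, LinearMap.flip_apply, LinearMap.neg_apply,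
      blockBracket_single_single, blockBasisBracket_swap q p, smul_neg, neg_neg]

lemma blockBracket_single_blockBasisBracket (p q r : ℕ × ℕ) :
    blockBracket (Finsupp.single p 1) (blockBasisBracket q r)
      = Finsupp.single (p.1 + q.1 + r.1 - 2, p.2 + q.2 + r.2 - 2)
          (((r.2 : ℚ) * q.1 - (r.1 : ℚ) * q.2) *
            (((q.2 : ℚ) + r.2 - 1) * p.1 - ((q.1 : ℚ) + r.1 - 1) * p.2)) := by
  rw [blockBasisBracket_eq q r, blockBracket_single_single, one_mul, blockBasisBracket_eq,
    Finsupp.smul_single']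
  by_cases hdeg : q.1 + r.1 = 0 ∨ q.2 + r.2 = 0
  -- if `[e_q, e_r] = 0` both sides vanish; otherwise `q + r - (1, 1)` is an honest subtraction
  · obtain ⟨hq, hr⟩ | ⟨hq, hr⟩ : (q.1 = 0 ∧ r.1 = 0) ∨ (q.2 = 0 ∧ r.2 = 0) := by omega
    all_goals simp [hq, hr]
  · dsimp only
    rw [Nat.cast_sub (by omega), Nat.cast_sub (by omega)]
    congr 2 <;> first | omega | push_cast; ring

/-- The three double brackets land on the same basis vector `e_{p+q+r-(2,2)}`, and their
coefficients cancel by a polynomial identity. -/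
lemma blockBracket_jacobiator_single (p q r : ℕ × ℕ) :
    blockBracket.jacobiator (Finsupp.single p 1) (Finsupp.single q 1) (Finsupp.single r 1) = 0 := by
  simp only [LinearMap.jacobiator, blockBracket_single_single, one_mul, one_smul,
    blockBracket_single_blockBasisBracket]
  rw [← add_rotate p.1 q.1 r.1, add_rotate r.1 p.1 q.1, ← add_rotate p.2 q.2 r.2,
    add_rotate r.2 p.2 q.2, ← Finsupp.single_add, ← Finsupp.single_add, Finsupp.single_eq_zero]
  ring

/-- The bilinear bracket with `[e_{m,l}, e_{n,k}] = (k·m − n·l)·e_{m+n−1,k+l−1}`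
is antisymmetric and satisfies the Jacobi identity, so it makes the free
`ℚ`-vector space on `{e_{m,l} : m, l ∈ ℕ}` a Lie algebra over `ℚ`. -/
theorem blockBracket_antisymm_jacobi :
    (∀ x y : (ℕ × ℕ) →₀ ℚ, blockBracket x y = - blockBracket y x) ∧
    (∀ x y z : (ℕ × ℕ) →₀ ℚ,
      blockBracket x (blockBracket y z) + blockBracket y (blockBracket z x) +
        blockBracket z (blockBracket x y) = 0) := by
  refine ⟨fun x y => ?_, fun x y z => ?_⟩
  · rw [← LinearMap.flip_apply, blockBracket_flip, LinearMap.neg_apply, LinearMap.neg_apply]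
  · refine blockBracket.jacobiator_eq_zero_of_basis Finsupp.basisSingleOne (fun p q r => ?_) x y z
    simpa only [Finsupp.coe_basisSingleOne] using blockBracket_jacobiator_single p q r
end

section
/- Let g be the Lie algebra over ℚ with basis {e_{m,l} : m, l ∈ ℕ} and bracket [e_{m,l}, e_{n,k}] = (k·m − n·l)·e_{m+n−1, k+l−1} (interpreted as 0 when m+n = 0 or k+l = 0, where the coefficient vanishes). Then g is generated as a Lie algebra by the five elements e_{0,1}, e_{1,0}, e_{1,1}, e_{2,1}, e_{1,2}; that is, the Lie subalgebra of g generated by {e_{0,1}, e_{1,0}, e_{1,1}, e_{2,1}, e_{1,2}} is all of g. -/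
/-- The basis vector `e_{m,l}`. -/
noncomputable def e (m l : ℕ) : (ℕ × ℕ) →₀ ℚ := Finsupp.single (m, l) 1

/-!
Bracketing `e_{0,1}` with `e_{1,0}` gives `e_{0,0}`. Bracketing with `e_{2,1}` raises the first
index by one and bracketing with `e_{1,2}` raises the second, each up to a rational factor; for
every target `e_{m,l}` one of the two factors is nonzero, so induction on the indices reaches
the whole basis.
-/

lemma blockBracket_e_e {m l n k a b : ℕ} (hmn : m + n = a + 1) (hlk : l + k = b + 1) :
    blockBracket (e m l) (e n k) = ((k * m - n * l : ℚ)) • e a b := by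
  have ha : m + n - 1 = a := by omega
  have hb : l + k - 1 = b := by omega
  simp [blockBracket, blockBasisBracket, e, Finsupp.smul_single, ha, hb,
    show 1 ≤ m + n by omega, show 1 ≤ l + k by omega]

lemma span_range_e : Submodule.span ℚ (Set.range fun p : ℕ × ℕ => e p.1 p.2) = ⊤ := by
  simpa [Finsupp.coe_basisSingleOne, e] using
    (Finsupp.basisSingleOne (R := ℚ) (ι := ℕ × ℕ)).span_eq

section BracketClosed

variable {N : Submodule ℚ ((ℕ × ℕ) →₀ ℚ)}

lemma e_mem_of_bracket_mem (hN : ∀ x ∈ N, ∀ y ∈ N, blockBracket x y ∈ N)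
    {m l n k a b : ℕ} (hml : e m l ∈ N) (hnk : e n k ∈ N)
    (hmn : m + n = a + 1) (hlk : l + k = b + 1) (hc : k * m ≠ n * l) :
    e a b ∈ N := by
  have hc' : (k * m - n * l : ℚ) ≠ 0 := sub_ne_zero.2 (by exact_mod_cast hc)
  have h := hN _ hml _ hnk
  rwa [blockBracket_e_e hmn hlk, Submodule.smul_mem_iff _ hc'] at h

lemma e_zero_zero_mem (hN : ∀ x ∈ N, ∀ y ∈ N, blockBracket x y ∈ N)
    (he01 : e 0 1 ∈ N) (he10 : e 1 0 ∈ N) : e 0 0 ∈ N :=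
  e_mem_of_bracket_mem hN he01 he10 rfl rfl (by decide)

lemma e_zero_left_mem (hN : ∀ x ∈ N, ∀ y ∈ N, blockBracket x y ∈ N)
    (he01 : e 0 1 ∈ N) (he10 : e 1 0 ∈ N) (he12 : e 1 2 ∈ N) :
    ∀ l, e 0 l ∈ N
  | 0 => e_zero_zero_mem hN he01 he10
  | 1 => he01
  | l + 2 =>
    e_mem_of_bracket_mem hN he12 (e_zero_left_mem hN he01 he10 he12 (l + 1)) rfl (by omega)
      (by omega)

lemma e_zero_right_mem (hN : ∀ x ∈ N, ∀ y ∈ N, blockBracket x y ∈ N)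
    (he01 : e 0 1 ∈ N) (he10 : e 1 0 ∈ N) (he21 : e 2 1 ∈ N) :
    ∀ m, e m 0 ∈ N
  | 0 => e_zero_zero_mem hN he01 he10
  | 1 => he10
  | m + 2 =>
    e_mem_of_bracket_mem hN he21 (e_zero_right_mem hN he01 he10 he21 (m + 1)) (by omega) rfl
      (by omega)

/-- The step `e_{m,l+1} → e_{m+1,l+1}` (bracketing with `e_{2,1}`) and the step
`e_{m+1,l} → e_{m+1,l+1}` (bracketing with `e_{1,2}`) have coefficients `2l + 2 - m` and
`l - 2m - 2`, which never vanish simultaneously. -/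
lemma e_mem (hN : ∀ x ∈ N, ∀ y ∈ N, blockBracket x y ∈ N)
    (he01 : e 0 1 ∈ N) (he10 : e 1 0 ∈ N) (he21 : e 2 1 ∈ N) (he12 : e 1 2 ∈ N) :
    ∀ m l, e m l ∈ N
  | 0, l => e_zero_left_mem hN he01 he10 he12 l
  | m + 1, 0 => e_zero_right_mem hN he01 he10 he21 (m + 1)
  | m + 1, l + 1 => by
    by_cases hl : l = 2 * m + 2
    · exact e_mem_of_bracket_mem hN he21 (e_mem hN he01 he10 he21 he12 m (l + 1))
        (by omega) (by omega) (by omega)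
    · exact e_mem_of_bracket_mem hN he12 (e_mem hN he01 he10 he21 he12 (m + 1) l)
        (by omega) (by omega) (by omega)

end BracketClosed

theorem blockAlgebra_generated_by_five_general
    (N : Submodule ℚ ((ℕ × ℕ) →₀ ℚ))
    (he01 : e 0 1 ∈ N) (he10 : e 1 0 ∈ N)
    (he21 : e 2 1 ∈ N) (he12 : e 1 2 ∈ N)
    (hclosed : ∀ x ∈ N, ∀ y ∈ N, blockBracket x y ∈ N) :
    ∀ v : (ℕ × ℕ) →₀ ℚ, v ∈ N := by
  have hN : N = ⊤ := by
    rw [eq_top_iff, ← span_range_e, Submodule.span_le]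
    rintro _ ⟨p, rfl⟩
    exact e_mem hclosed he01 he10 he21 he12 p.1 p.2
  simp [hN]

/-- The Block type Lie algebra `g` with basis `{e_{m,l} : m, l ∈ ℕ}` and bracket
`[e_{m,l}, e_{n,k}] = (k·m − n·l)·e_{m+n−1,k+l−1}` is generated, as a Lie
algebra, by the five elements `e_{0,1}, e_{1,0}, e_{1,1}, e_{2,1}, e_{1,2}`:
every `ℚ`-subspace containing these five elements and closed under the bracket
is all of `g`. -/
theorem blockAlgebra_generated_by_five
    (N : Submodule ℚ ((ℕ × ℕ) →₀ ℚ))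
    (he01 : e 0 1 ∈ N) (he10 : e 1 0 ∈ N) (he11 : e 1 1 ∈ N)
    (he21 : e 2 1 ∈ N) (he12 : e 1 2 ∈ N)
    (hclosed : ∀ x ∈ N, ∀ y ∈ N, blockBracket x y ∈ N) :
    ∀ v : (ℕ × ℕ) →₀ ℚ, v ∈ N :=
  blockAlgebra_generated_by_five_general N he01 he10 he21 he12 hclosed
end
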